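/- (Generalized Fiedler–Bapat identity) Let Q be a real symmetric positive semidefinite n×n matrix with ker(Q) = span(1), n ≥ 2. Set ζ := diagvec(Q†), Ω := 1ζᵀ + ζ1ᵀ − 2Q†, p := (1/2)Qζ + (1/n)1, and σ² := (1/4)ζᵀQζ + (1/n)1ᵀζ. Then [[0, 1ᵀ],[1, Ω]]^{−1} = −(1/2)·[[4σ², −2pᵀ],[−2p, Q]]. -/

import Mathlib

open Matrix Classical

/-- The Moore–Penrose pseudoinverse of a real matrix, defined via its four
characterizing Penrose equations (which have a unique solution). -/
noncomputable def pinv {m k : Type*} [Fintype m] [Fintype k]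
    (A : Matrix m k ℝ) : Matrix k m ℝ :=
  if h : ∃ X : Matrix k m ℝ,
      A * X * A = A ∧ X * A * X = X ∧ (A * X)ᵀ = A * X ∧ (X * A)ᵀ = X * A
  then h.choose else 0

/-!
Let `J = 𝟙𝟙ᵀ / n` be the orthogonal projection onto `ker Q = span 𝟙`. Since `QJ = JQ = 0`, the
matrix `Q + J` is invertible and `(Q + J)⁻¹ - J` satisfies the Penrose equations, so it is `Q†`,
whence `Q†Q = I - J` and `Q†𝟙 = 0`. With these two facts the block product
`[[0, 𝟙ᵀ], [𝟙, Ω]] · [[4σ², -2pᵀ], [-2p, Q]]` reduces to `-2I`, the two nontrivial blocks being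
`Ωp = 2σ²𝟙` (because `Q†p = (ζ - Jζ) / 2`) and `ΩQ = 2 𝟙pᵀ - 2I`.
-/

namespace Matrix

section Penrose

variable {m k R : Type*} [Fintype m] [Fintype k] [CommRing R]

theorem mul_eq_mul_of_penrose {A : Matrix m k R} {X Y : Matrix k m R}
    (hX : A * X * A = A) (hY : A * Y * A = A) (hXs : (A * X)ᵀ = A * X)
    (hYs : (A * Y)ᵀ = A * Y) : A * X = A * Y :=
  calc A * X = (A * Y * A * X)ᵀ := by rw [hY, hXs]
    _ = A * X * (A * Y) := by
      rw [Matrix.mul_assoc (A * Y), transpose_mul, hXs, hYs]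
    _ = A * Y := by rw [← Matrix.mul_assoc, hX]

theorem pinv_eq_of_penrose {A : Matrix m k ℝ} {X : Matrix k m ℝ}
    (h₁ : A * X * A = A) (h₂ : X * A * X = X) (h₃ : (A * X)ᵀ = A * X)
    (h₄ : (X * A)ᵀ = X * A) : pinv A = X := by
  have hex : ∃ X : Matrix k m ℝ,
      A * X * A = A ∧ X * A * X = X ∧ (A * X)ᵀ = A * X ∧ (X * A)ᵀ = X * A :=
    ⟨X, h₁, h₂, h₃, h₄⟩
  obtain ⟨g₁, g₂, g₃, g₄⟩ := hex.choose_spec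
  have hAX : A * hex.choose = A * X := mul_eq_mul_of_penrose g₁ h₁ g₃ h₃
  have hXA : hex.choose * A = X * A := by
    have := mul_eq_mul_of_penrose (A := Aᵀ) (X := hex.choose ᵀ) (Y := Xᵀ)
      (by rw [← transpose_mul, ← transpose_mul, ← Matrix.mul_assoc, g₁])
      (by rw [← transpose_mul, ← transpose_mul, ← Matrix.mul_assoc, h₁])
      (by rw [← transpose_mul, transpose_transpose, g₄])
      (by rw [← transpose_mul, transpose_transpose, h₄])
    simpa only [← transpose_mul, transpose_inj] using this
  rw [pinv, dif_pos hex, ← g₂, hXA, Matrix.mul_assoc, hAX, ← Matrix.mul_assoc, h₂]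

end Penrose

section Complement

variable {ι K : Type*} [Fintype ι] [DecidableEq ι] [Field K] {Q P : Matrix ι ι K}

theorem isUnit_det_add_of_ker_le_range (hP : P * P = P) (hPQ : P * Q = 0)
    (hker : ∀ v, Q *ᵥ v = 0 → P *ᵥ v = v) : IsUnit (Q + P).det := by
  rw [isUnit_iff_ne_zero, Ne, ← exists_mulVec_eq_zero_iff]
  rintro ⟨v, hv0, hv⟩
  have hPB : P * (Q + P) = P := by rw [Matrix.mul_add, hPQ, hP, zero_add]
  have hPv : P *ᵥ v = 0 := by simpa [mulVec_mulVec, hPB] using congrArg (P *ᵥ ·) hv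
  have hQv : Q *ᵥ v = 0 := by simpa [add_mulVec, hPv] using hv
  exact hv0 (by rw [← hker v hQv, hPv])

theorem inv_add_mul_proj (hP : P * P = P) (hQP : Q * P = 0) (hu : IsUnit (Q + P).det) :
    (Q + P)⁻¹ * P = P :=
  calc (Q + P)⁻¹ * P = (Q + P)⁻¹ * ((Q + P) * P) := by rw [Matrix.add_mul, hQP, hP, zero_add]
    _ = P := nonsing_inv_mul_cancel_left _ _ hu

theorem proj_mul_inv_add (hP : P * P = P) (hPQ : P * Q = 0) (hu : IsUnit (Q + P).det) :
    P * (Q + P)⁻¹ = P :=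
  calc P * (Q + P)⁻¹ = P * (Q + P) * (Q + P)⁻¹ := by rw [Matrix.mul_add, hPQ, hP, zero_add]
    _ = P := mul_nonsing_inv_cancel_right _ _ hu

theorem inv_add_sub_mul_self (hP : P * P = P) (hQP : Q * P = 0) (hPQ : P * Q = 0)
    (hu : IsUnit (Q + P).det) : ((Q + P)⁻¹ - P) * Q = 1 - P :=
  calc ((Q + P)⁻¹ - P) * Q = (Q + P)⁻¹ * ((Q + P) - P) := by
        rw [Matrix.sub_mul, hPQ, sub_zero, add_sub_cancel_right]
    _ = 1 - P := by rw [Matrix.mul_sub, nonsing_inv_mul _ hu, inv_add_mul_proj hP hQP hu]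

theorem mul_inv_add_sub (hP : P * P = P) (hQP : Q * P = 0) (hPQ : P * Q = 0)
    (hu : IsUnit (Q + P).det) : Q * ((Q + P)⁻¹ - P) = 1 - P :=
  calc Q * ((Q + P)⁻¹ - P) = ((Q + P) - P) * (Q + P)⁻¹ := by
        rw [Matrix.mul_sub, hQP, sub_zero, add_sub_cancel_right]
    _ = 1 - P := by rw [Matrix.sub_mul, mul_nonsing_inv _ hu, proj_mul_inv_add hP hPQ hu]

end Complement

theorem pinv_eq_inv_add_sub {ι : Type*} [Fintype ι] [DecidableEq ι] {Q P : Matrix ι ι ℝ}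
    (hP : P * P = P) (hPt : Pᵀ = P) (hQP : Q * P = 0) (hPQ : P * Q = 0)
    (hu : IsUnit (Q + P).det) : pinv Q = (Q + P)⁻¹ - P := by
  have hXQ := inv_add_sub_mul_self hP hQP hPQ hu
  have hQX := mul_inv_add_sub hP hQP hPQ hu
  have hPX : P * ((Q + P)⁻¹ - P) = 0 := by
    rw [Matrix.mul_sub, proj_mul_inv_add hP hPQ hu, hP, sub_self]
  apply pinv_eq_of_penrose
  · rw [hQX, Matrix.sub_mul, Matrix.one_mul, hPQ, sub_zero]
  · rw [hXQ, Matrix.sub_mul, Matrix.one_mul, hPX, sub_zero]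
  · rw [hQX, transpose_sub, transpose_one, hPt]
  · rw [hXQ, transpose_sub, transpose_one, hPt]

section Averaging

variable (ι K : Type*) [Fintype ι] [Field K]

noncomputable def averagingMatrix : Matrix ι ι K := of fun _ _ => (Fintype.card ι : K)⁻¹

variable {ι K}

theorem averagingMatrix_mulVec (v : ι → K) :
    averagingMatrix ι K *ᵥ v = fun _ => (Fintype.card ι : K)⁻¹ * ∑ i, v i := by
  ext; simp [averagingMatrix, mulVec, dotProduct, Finset.mul_sum]

theorem transpose_averagingMatrix : (averagingMatrix ι K)ᵀ = averagingMatrix ι K := rfl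

theorem mul_averagingMatrix_eq_zero {Q : Matrix ι ι K} (hQ : Q *ᵥ 1 = 0) :
    Q * averagingMatrix ι K = 0 := by
  ext i j
  have hrow : ∑ k, Q i k = 0 := by simpa [mulVec, dotProduct] using congrFun hQ i
  simp [averagingMatrix, mul_apply, ← Finset.sum_mul, hrow]

theorem averagingMatrix_mul_eq_zero {Q : Matrix ι ι K} (hQ : 1 ᵥ* Q = 0) :
    averagingMatrix ι K * Q = 0 := by
  ext i j
  have hcol : ∑ k, Q k j = 0 := by simpa [vecMul, dotProduct] using congrFun hQ j
  simp [averagingMatrix, mul_apply, ← Finset.mul_sum, hcol]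

variable [Nonempty ι] [CharZero K]

theorem averagingMatrix_mulVec_const (c : K) :
    averagingMatrix ι K *ᵥ (fun _ => c) = fun _ => c := by
  ext; simp [averagingMatrix_mulVec]

theorem averagingMatrix_mul_self : averagingMatrix ι K * averagingMatrix ι K = averagingMatrix ι K := by
  ext; simp [averagingMatrix, mul_apply]

end Averaging

theorem pinv_mul_eq_one_sub_averagingMatrix {ι : Type*} [Fintype ι] [DecidableEq ι] [Nonempty ι]
    {Q : Matrix ι ι ℝ} (hQ : Q.IsSymm) (hker : ∀ v, Q *ᵥ v = 0 ↔ ∃ c : ℝ, v = fun _ => c) :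
    pinv Q * Q = 1 - averagingMatrix ι ℝ ∧ pinv Q *ᵥ 1 = 0 := by
  have hQ1 : Q *ᵥ 1 = 0 := (hker 1).2 ⟨1, rfl⟩
  have hJJ := averagingMatrix_mul_self (ι := ι) (K := ℝ)
  have hQJ := mul_averagingMatrix_eq_zero hQ1
  have hJQ : averagingMatrix ι ℝ * Q = 0 :=
    averagingMatrix_mul_eq_zero (by rw [← hQ.eq, vecMul_transpose, hQ1])
  have hu : IsUnit (Q + averagingMatrix ι ℝ).det := by
    refine isUnit_det_add_of_ker_le_range hJJ hJQ fun v hv => ?_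
    obtain ⟨c, rfl⟩ := (hker v).1 hv
    exact averagingMatrix_mulVec_const c
  have hpinv := pinv_eq_inv_add_sub hJJ transpose_averagingMatrix hQJ hJQ hu
  refine ⟨hpinv ▸ inv_add_sub_mul_self hJJ hQJ hJQ hu, ?_⟩
  calc pinv Q *ᵥ 1 = pinv Q *ᵥ averagingMatrix ι ℝ *ᵥ fun _ => 1 := by
        rw [averagingMatrix_mulVec_const]; rfl
    _ = (pinv Q * averagingMatrix ι ℝ) *ᵥ 1 := mulVec_mulVec _ _ _
    _ = 0 := by
        rw [hpinv, Matrix.sub_mul, inv_add_mul_proj hJJ hQJ hu, hJJ, sub_self, zero_mulVec]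

section Bordered

variable {ι K : Type*} [Fintype ι] [Field K] [CharZero K] {Q L : Matrix ι ι K} {ζ p : ι → K} {σ2 : K}

/-- With `L = Q†` and `ζ = diag Q†` this is the matrix `Ω = 𝟙ζᵀ + ζ𝟙ᵀ - 2Q†`. -/
def resistanceMatrix (ζ : ι → K) (L : Matrix ι ι K) : Matrix ι ι K :=
  of (fun _ j => ζ j) + of (fun i _ => ζ i) - 2 • L

theorem sum_eq_one_of_eq_half_mulVec_add [Nonempty ι] (h1Q : 1 ᵥ* Q = 0)
    (hp : p = (1 / 2 : K) • Q *ᵥ ζ + (1 / (Fintype.card ι : K)) • ((fun _ => 1) : ι → K)) :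
    ∑ i, p i = 1 := by
  have hcard : (Fintype.card ι : K) ≠ 0 := Nat.cast_ne_zero.2 Fintype.card_ne_zero
  have hsum : ∑ i, (Q *ᵥ ζ) i = 0 := by
    rw [← one_dotProduct, dotProduct_mulVec, h1Q, zero_dotProduct]
  simp [hp, Finset.sum_add_distrib, ← Finset.mul_sum, hsum, hcard]

theorem resistanceMatrix_mulVec_eq_const [DecidableEq ι] [Nonempty ι] (h1Q : 1 ᵥ* Q = 0)
    (hLQ : L * Q = 1 - averagingMatrix ι K) (hL1 : L *ᵥ 1 = 0)
    (hp : p = (1 / 2 : K) • Q *ᵥ ζ + (1 / (Fintype.card ι : K)) • ((fun _ => 1) : ι → K)) :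
    resistanceMatrix ζ L *ᵥ p =
      fun _ => 2 * ((1 / 4) * (ζ ⬝ᵥ Q *ᵥ ζ) + (1 / (Fintype.card ι : K)) * ∑ i, ζ i) := by
  have hLp : L *ᵥ p = (1 / 2 : K) • (ζ - averagingMatrix ι K *ᵥ ζ) := by
    rw [hp, mulVec_add, mulVec_smul, mulVec_smul, mulVec_mulVec, hLQ, sub_mulVec, one_mulVec,
      show L *ᵥ (fun _ => (1 : K)) = 0 from hL1, smul_zero, add_zero]
  have hζp : ζ ⬝ᵥ p = (1 / 2) * (ζ ⬝ᵥ Q *ᵥ ζ) + (1 / (Fintype.card ι : K)) * ∑ i, ζ i := by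
    rw [hp, dotProduct_add, dotProduct_smul, dotProduct_smul, smul_eq_mul, smul_eq_mul,
      show ζ ⬝ᵥ (fun _ => (1 : K)) = ∑ i, ζ i from dotProduct_one ζ]
  ext i
  have hrow : ((of fun _ j => ζ j : Matrix ι ι K) *ᵥ p) i = ζ ⬝ᵥ p := rfl
  have hcol : ((of fun i _ => ζ i : Matrix ι ι K) *ᵥ p) i = ζ i := by
    simp [mulVec, dotProduct, ← Finset.mul_sum, sum_eq_one_of_eq_half_mulVec_add h1Q hp]
  rw [resistanceMatrix, sub_mulVec, add_mulVec, Pi.sub_apply, Pi.add_apply, hrow, hcol,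
    smul_mulVec, hLp, hζp]
  simp only [averagingMatrix_mulVec, Pi.smul_apply, Pi.sub_apply, smul_eq_mul, nsmul_eq_mul]
  ring

theorem resistanceMatrix_mul_eq [DecidableEq ι] (hQ : Q.IsSymm) (h1Q : 1 ᵥ* Q = 0)
    (hLQ : L * Q = 1 - averagingMatrix ι K)
    (hp : p = (1 / 2 : K) • Q *ᵥ ζ + (1 / (Fintype.card ι : K)) • ((fun _ => 1) : ι → K)) :
    resistanceMatrix ζ L * Q = of (fun _ j => 2 * p j) - 2 • 1 := by
  rw [resistanceMatrix, sub_mul, add_mul, smul_mul, hLQ]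
  ext i j
  have hrow : ((of fun _ j => ζ j : Matrix ι ι K) * Q) i j = (Q *ᵥ ζ) j := by
    simp only [mul_apply, of_apply, mulVec, dotProduct, hQ.apply, mul_comm]
  have hcol : ((of fun i _ => ζ i : Matrix ι ι K) * Q) i j = 0 := by
    simpa [mul_apply, ← Finset.mul_sum, vecMul, dotProduct] using Or.inr (congrFun h1Q j)
  rw [sub_apply, add_apply, hrow, hcol]
  simp only [hp, averagingMatrix, two_smul, sub_apply, add_apply, of_apply, Pi.add_apply,
    Pi.smul_apply, smul_eq_mul]
  ring

theorem inv_fromBlocks_zero_one_resistanceMatrix [DecidableEq ι] [Nonempty ι] (hQ : Q.IsSymm)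
    (hQ1 : Q *ᵥ 1 = 0) (hLQ : L * Q = 1 - averagingMatrix ι K) (hL1 : L *ᵥ 1 = 0)
    (hp : p = (1 / 2 : K) • Q *ᵥ ζ + (1 / (Fintype.card ι : K)) • ((fun _ => 1) : ι → K))
    (hσ2 : σ2 = (1 / 4) * (ζ ⬝ᵥ Q *ᵥ ζ) + (1 / (Fintype.card ι : K)) * ∑ i, ζ i) :
    (fromBlocks (0 : Matrix (Fin 1) (Fin 1) K) (of fun _ _ => (1 : K)) (of fun _ _ => (1 : K))
        (resistanceMatrix ζ L))⁻¹ =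
      (-(1 / 2 : K)) • fromBlocks (of fun _ _ => 4 * σ2) (of fun _ j => -2 * p j)
        (of fun i _ => -2 * p i) Q := by
  have h1Q : 1 ᵥ* Q = 0 := by rw [← hQ.eq, vecMul_transpose, hQ1]
  have hp1 := sum_eq_one_of_eq_half_mulVec_add h1Q hp
  have hΩp := resistanceMatrix_mulVec_eq_const h1Q hLQ hL1 hp
  have hΩQ := resistanceMatrix_mul_eq hQ h1Q hLQ hp
  rw [← hσ2] at hΩp
  apply inv_eq_right_inv
  rw [Matrix.mul_smul, fromBlocks_multiply, fromBlocks_smul, ← fromBlocks_one]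
  congr 1 <;> ext i j
  · obtain rfl := Subsingleton.elim i j
    simp [mul_apply, ← Finset.mul_sum, hp1]
  · simpa [mul_apply, vecMul, dotProduct] using congrFun h1Q j
  · have := congrFun hΩp i
    simp only [mulVec, dotProduct] at this
    simp [mul_apply, mul_left_comm _ (2 : K), ← Finset.mul_sum, this]
    ring
  · have := congrFun (congrFun hΩQ i) j
    rw [sub_apply, smul_apply, of_apply] at this
    simp only [smul_apply, add_apply, this, mul_apply, of_apply, Fin.sum_univ_one, one_mul,
      smul_eq_mul, nsmul_eq_mul]
    ring

end Bordered

end Matrix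

theorem generalized_fiedler_bapat_identity_general
    {n : ℕ} (hn : 2 ≤ n) (Q : Matrix (Fin n) (Fin n) ℝ)
    (hQ : Q.PosSemidef)
    (hker : ∀ v : Fin n → ℝ, Q.mulVec v = 0 ↔ ∃ c : ℝ, v = fun _ => c)
    (ζ : Fin n → ℝ)
    (Ω : Matrix (Fin n) (Fin n) ℝ)
    (hΩ : Ω = Matrix.of (fun _ j => ζ j) + Matrix.of (fun i _ => ζ i) - 2 • pinv Q)
    (p : Fin n → ℝ) (hp : p = (1 / 2 : ℝ) • Q.mulVec ζ + (1 / (n : ℝ)) • ((fun _ => 1) : Fin n → ℝ))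
    (σ2 : ℝ) (hσ2 : σ2 = (1 / 4) * (ζ ⬝ᵥ Q.mulVec ζ) + (1 / (n : ℝ)) * ∑ i, ζ i) :
    (Matrix.fromBlocks (0 : Matrix (Fin 1) (Fin 1) ℝ)
        (Matrix.of fun _ _ => (1 : ℝ)) (Matrix.of fun _ _ => (1 : ℝ)) Ω)⁻¹ =
      (-(1 / 2 : ℝ)) • Matrix.fromBlocks
        (Matrix.of fun _ _ => 4 * σ2)
        (Matrix.of fun _ j => -2 * p j)
        (Matrix.of fun i _ => -2 * p i) Q := by
  have : Nonempty (Fin n) := ⟨⟨0, by omega⟩⟩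
  have hsymm : Q.IsSymm := isHermitian_iff_isSymm.1 hQ.isHermitian
  obtain ⟨hLQ, hL1⟩ := pinv_mul_eq_one_sub_averagingMatrix hsymm hker
  subst hΩ
  exact inv_fromBlocks_zero_one_resistanceMatrix hsymm ((hker 1).2 ⟨1, rfl⟩)
    hLQ hL1 (by rw [hp, Fintype.card_fin]) (by rw [hσ2, Fintype.card_fin])

theorem generalized_fiedler_bapat_identity
    {n : ℕ} (hn : 2 ≤ n) (Q : Matrix (Fin n) (Fin n) ℝ)
    (hQ : Q.PosSemidef)
    (hker : ∀ v : Fin n → ℝ, Q.mulVec v = 0 ↔ ∃ c : ℝ, v = fun _ => c)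
    (ζ : Fin n → ℝ) (hζ : ζ = fun i => pinv Q i i)
    (Ω : Matrix (Fin n) (Fin n) ℝ)
    (hΩ : Ω = Matrix.of (fun _ j => ζ j) + Matrix.of (fun i _ => ζ i) - 2 • pinv Q)
    (p : Fin n → ℝ) (hp : p = (1 / 2 : ℝ) • Q.mulVec ζ + (1 / (n : ℝ)) • ((fun _ => 1) : Fin n → ℝ))
    (σ2 : ℝ) (hσ2 : σ2 = (1 / 4) * (ζ ⬝ᵥ Q.mulVec ζ) + (1 / (n : ℝ)) * ∑ i, ζ i) :
    (Matrix.fromBlocks (0 : Matrix (Fin 1) (Fin 1) ℝ)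
        (Matrix.of fun _ _ => (1 : ℝ)) (Matrix.of fun _ _ => (1 : ℝ)) Ω)⁻¹ =
      (-(1 / 2 : ℝ)) • Matrix.fromBlocks
        (Matrix.of fun _ _ => 4 * σ2)
        (Matrix.of fun _ j => -2 * p j)
        (Matrix.of fun i _ => -2 * p i) Q :=
  generalized_fiedler_bapat_identity_general hn Q hQ hker ζ Ω hΩ p hp σ2 hσ2
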